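/- arXiv:1206.1196 — 4 statements merged into one kernel-verified Lean document; each statement's English description precedes it below -/
import Mathlib

section
/- Let G be a group of orientation-preserving homeomorphisms of the real line acting freely (no element other than the identity has a fixed point). Then G is abelian. -/
/-!
Order `G` by `g ≤ h ↔ g 0 ≤ h 0`; freeness makes this a linear order. By the intermediate value
theorem, two elements that compare one way at one point compare the same way everywhere, so the
order is invariant on both sides, and since a fixed-point-free increasing homeomorphism pushes every
orbit to `+∞`, it is archimedean.

An archimedean bi-ordered group is abelian (Hölder): if `y * x < x * y`, squeezing `x` and `y`
between consecutive powers of any `h > 1` shows that `c = (y * x)⁻¹ * (x * y) > 1` satisfies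
`c < h ^ 2`. If some `h` lies strictly between `1` and `c`, then `k = min h (h⁻¹ * c)` has
`k ^ 2 ≤ c`, a contradiction; otherwise `c` is the least element above `1`, so every element is a
power of `c` and `x`, `y` commute.
-/

section ArchimedeanBiorder

variable {α : Type*} [Group α] [LinearOrder α] [MulLeftMono α] [MulRightMono α]

theorem exists_sq_le_of_lt {h c : α} (hh : 1 < h) (hc : h < c) : ∃ k, 1 < k ∧ k ^ 2 ≤ c :=
  ⟨min h (h⁻¹ * c), lt_min hh (lt_inv_mul_iff_mul_lt.2 (by rwa [mul_one])), by
    rw [sq]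
    calc min h (h⁻¹ * c) * min h (h⁻¹ * c) ≤ h * (h⁻¹ * c) :=
          mul_le_mul' (min_le_left _ _) (min_le_right _ _)
      _ = c := mul_inv_cancel_left h c⟩

variable (harch : ∀ a b : α, 1 < a → ∃ n : ℕ, b < a ^ n)
include harch

theorem exists_zpow_le_and_lt_zpow_add_one {a : α} (ha : 1 < a) (b : α) :
    ∃ m : ℤ, a ^ m ≤ b ∧ b < a ^ (m + 1) := by
  have hmono : StrictMono fun n : ℤ => a ^ n :=
    strictMono_int_of_lt_succ fun n => by rw [zpow_add_one]; exact lt_mul_of_one_lt_right' _ ha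
  have hbdd : ∃ M : ℤ, ∀ m : ℤ, a ^ m ≤ b → m ≤ M := by
    obtain ⟨n, hn⟩ := harch a b ha
    exact ⟨n, fun m hm => (hmono.lt_iff_lt.1 (hm.trans_lt (by rwa [zpow_natCast]))).le⟩
  have hne : ∃ m : ℤ, a ^ m ≤ b := by
    obtain ⟨n, hn⟩ := harch a b⁻¹ ha
    exact ⟨-n, by rw [zpow_neg, zpow_natCast]; exact inv_le_of_inv_le' hn.le⟩
  obtain ⟨m, hm, hmax⟩ := Int.exists_greatest_of_bdd hbdd hne
  exact ⟨m, hm, lt_of_not_ge fun h => (hmax _ h).not_gt (lt_add_one m)⟩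

theorem inv_mul_lt_sq {h : α} (hh : 1 < h) (x y : α) : (y * x)⁻¹ * (x * y) < h ^ 2 := by
  obtain ⟨m, hm, hm'⟩ := exists_zpow_le_and_lt_zpow_add_one harch hh x
  obtain ⟨n, hn, hn'⟩ := exists_zpow_le_and_lt_zpow_add_one harch hh y
  have hyx : (y * x)⁻¹ ≤ h ^ (-(n + m)) := by
    rw [zpow_neg, inv_le_inv_iff, zpow_add]; exact mul_le_mul' hn hm
  have hxy : x * y < h ^ (m + 1 + (n + 1)) := by
    rw [zpow_add]; exact mul_lt_mul_of_lt_of_le hm' hn'.le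
  calc (y * x)⁻¹ * (x * y) < h ^ (-(n + m)) * h ^ (m + 1 + (n + 1)) :=
        mul_lt_mul_of_le_of_lt hyx hxy
    _ = h ^ 2 := by rw [← zpow_add, ← zpow_natCast]; congr 1; ring

theorem exists_eq_zpow_of_forall_le {a : α} (ha : 1 < a) (hmin : ∀ b, 1 < b → a ≤ b) (x : α) :
    ∃ m : ℤ, x = a ^ m := by
  obtain ⟨m, hm, hm'⟩ := exists_zpow_le_and_lt_zpow_add_one harch ha x
  refine ⟨m, (hm.lt_or_eq.resolve_left fun hlt => ?_).symm⟩
  have := hmin _ (lt_inv_mul_iff_mul_lt.2 (by rwa [mul_one]))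
  rw [le_inv_mul_iff_mul_le, ← zpow_add_one] at this
  exact this.not_gt hm'

theorem mul_comm_of_archimedean (x y : α) : x * y = y * x := by
  wlog hlt : y * x < x * y generalizing x y
  · exact (not_lt.1 hlt).lt_or_eq.elim (fun h => (this y x h).symm) id
  set c := (y * x)⁻¹ * (x * y)
  have hc : 1 < c := lt_inv_mul_iff_mul_lt.2 (by rwa [mul_one])
  by_cases hdense : ∃ h, 1 < h ∧ h < c
  · obtain ⟨h, hh, hhc⟩ := hdense
    obtain ⟨k, hk, hkc⟩ := exists_sq_le_of_lt hh hhc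
    exact absurd (inv_mul_lt_sq harch hk x y) hkc.not_gt
  · push Not at hdense
    obtain ⟨m, hm⟩ := exists_eq_zpow_of_forall_le harch hc hdense x
    obtain ⟨n, hn⟩ := exists_eq_zpow_of_forall_le harch hc hdense y
    rw [hm, hn]
    exact (Commute.zpow_zpow_self c m n).eq

end ArchimedeanBiorder

open Filter Topology

theorem exists_lt_iterate_of_forall_lt_apply {α : Type*} [ConditionallyCompleteLinearOrder α]
    [TopologicalSpace α] [OrderTopology α] {f : α → α} (hf : Continuous f)
    (hlt : ∀ x, x < f x) (x y : α) : ∃ n : ℕ, y < f^[n] x := by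
  by_contra! hle
  have hmono : Monotone fun n => f^[n] x :=
    monotone_nat_of_le_succ fun n => by rw [Function.iterate_succ_apply']; exact (hlt _).le
  have hL := tendsto_atTop_ciSup hmono ⟨y, by rintro _ ⟨n, rfl⟩; exact hle n⟩
  have hfL : Tendsto (fun n => f^[n + 1] x) atTop (𝓝 (f (⨆ n, f^[n] x))) := by
    simp only [Function.iterate_succ_apply']
    exact (hf.tendsto _).comp hL
  exact (hlt _).ne (tendsto_nhds_unique ((tendsto_add_atTop_iff_nat 1).2 hL) hfL)

section FreeAction

variable {G : Subgroup (Equiv.Perm ℝ)} (hfree : ∀ g ∈ G, g ≠ 1 → ∀ x : ℝ, g x ≠ x)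
include hfree

theorem eq_of_apply_eq_of_free {g h : Equiv.Perm ℝ} (hg : g ∈ G) (hh : h ∈ G) {x : ℝ}
    (hx : g x = h x) : g = h := by
  by_contra hne
  refine hfree (h⁻¹ * g) (mul_mem (inv_mem hh) hg) ?_ x ?_
  · rwa [Ne, inv_mul_eq_one, eq_comm]
  · simp [hx]

theorem apply_lt_apply_of_free {g h : Equiv.Perm ℝ} (hg : g ∈ G) (hh : h ∈ G)
    (hgc : Continuous g) (hhc : Continuous h) {x : ℝ} (hx : g x < h x) (y : ℝ) : g y < h y := by
  by_contra! hy
  obtain ⟨t, ht⟩ := intermediate_value_univ x y (hgc.sub hhc)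
    ⟨sub_nonpos.2 hx.le, sub_nonneg.2 hy⟩
  exact hx.ne (by rw [eq_of_apply_eq_of_free hfree hg hh (sub_eq_zero.1 ht)])

theorem apply_le_apply_of_free {g h : Equiv.Perm ℝ} (hg : g ∈ G) (hh : h ∈ G)
    (hgc : Continuous g) (hhc : Continuous h) {x : ℝ} (hx : g x ≤ h x) (y : ℝ) : g y ≤ h y := by
  obtain hx | hx := hx.eq_or_lt
  · rw [eq_of_apply_eq_of_free hfree hg hh hx]
  · exact (apply_lt_apply_of_free hfree hg hh hgc hhc hx y).le

noncomputable abbrev linearOrderOfFree : LinearOrder G :=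
  LinearOrder.lift' (fun g : G => (g : Equiv.Perm ℝ) 0) fun g h hgh =>
    Subtype.ext (eq_of_apply_eq_of_free hfree g.2 h.2 hgh)

theorem mulLeftMono_linearOrderOfFree (hmono : ∀ g ∈ G, StrictMono g) :
    letI := linearOrderOfFree hfree; MulLeftMono G :=
  let _ := linearOrderOfFree hfree
  ⟨fun k _ _ hgh => (hmono k k.2).monotone hgh⟩

theorem mulRightMono_linearOrderOfFree (hcont : ∀ g ∈ G, Continuous g) :
    letI := linearOrderOfFree hfree; MulRightMono G :=
  let _ := linearOrderOfFree hfree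
  ⟨fun k g h hgh =>
    apply_le_apply_of_free hfree g.2 h.2 (hcont g g.2) (hcont h h.2) hgh ((k : Equiv.Perm ℝ) 0)⟩

theorem archimedean_linearOrderOfFree (hcont : ∀ g ∈ G, Continuous g) :
    letI := linearOrderOfFree hfree; ∀ a b : G, 1 < a → ∃ n : ℕ, b < a ^ n := by
  intro a b ha
  have hlt : ∀ x, x < (a : Equiv.Perm ℝ) x :=
    apply_lt_apply_of_free hfree (one_mem G) a.2 continuous_id (hcont a a.2) ha
  obtain ⟨n, hn⟩ :=
    exists_lt_iterate_of_forall_lt_apply (hcont a a.2) hlt 0 ((b : Equiv.Perm ℝ) 0)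
  refine ⟨n, ?_⟩
  show (b : Equiv.Perm ℝ) 0 < ((a ^ n : G) : Equiv.Perm ℝ) 0
  rwa [Subgroup.coe_pow, ← Equiv.Perm.iterate_eq_pow]

end FreeAction

/-- Hölder's theorem for the line: a group of orientation-preserving homeomorphisms of ℝ
acting freely is abelian. -/
theorem holder_abelian (G : Subgroup (Equiv.Perm ℝ))
    (hcont : ∀ g ∈ G, Continuous ⇑g ∧ Continuous ⇑g.symm)
    (hmono : ∀ g ∈ G, StrictMono ⇑g)
    (hfree : ∀ g ∈ G, g ≠ 1 → ∀ x : ℝ, g x ≠ x) :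
    ∀ a ∈ G, ∀ b ∈ G, a * b = b * a := by
  intro a ha b hb
  have hcont' : ∀ g ∈ G, Continuous g := fun g hg => (hcont g hg).1
  let _ := linearOrderOfFree hfree
  have := mulLeftMono_linearOrderOfFree hfree hmono
  have := mulRightMono_linearOrderOfFree hfree hcont'
  exact congrArg Subtype.val
    (mul_comm_of_archimedean (archimedean_linearOrderOfFree hfree hcont') ⟨a, ha⟩ ⟨b, hb⟩)
end

section
/- Let g and h be commuting C² diffeomorphisms of the half-open interval [0,1). If g has no fixed point in (0,1) and h is not the identity, then h has no fixed point in (0,1). -/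
/-!
Replacing `g` by `g⁻¹` we may assume `g x < x` on `(0,1)`, so that `gⁿ x → 0`. If `h` fixes
`b ∈ (0,1)`, it fixes every `gⁿ b`, hence `h'(0) = 1`. Since `g` is `C²` and the intervals
`gᵏ [g b, b]` have total length at most `b`, the iterates `gⁿ` have bounded distortion on the
fundamental domain `[g b, b]`. So if `h y ≠ y` for some `y ∈ [g b, b]`, then `h` moves `gⁿ y`
by a fixed proportion of the length of `gⁿ [g b, b]`, and the mean value theorem produces
points `ξₙ → 0` with `|h'(ξₙ) - 1|` bounded away from `0`, contradicting `h'(0) = 1`. Hence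
`h` is the identity on `[g b, b]`, and by commutation on all of `(0,1)`.
-/
/-- A model for an orientation-preserving C^r diffeomorphism of the half-open
interval [0,1): a permutation of ℝ that is the identity outside [0,1), restricts to a
C^r monotone bijection of [0,1) with C^r inverse. -/
def IsIcoDiff (r : ℕ∞) (g : Equiv.Perm ℝ) : Prop :=
  ContDiffOn ℝ r ⇑g (Set.Ico 0 1) ∧ ContDiffOn ℝ r ⇑g.symm (Set.Ico 0 1) ∧
  Set.BijOn ⇑g (Set.Ico 0 1) (Set.Ico 0 1) ∧ StrictMonoOn ⇑g (Set.Ico 0 1) ∧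
  ∀ x : ℝ, x ∉ Set.Ico (0:ℝ) 1 → g x = x

open Set Filter Topology Function

lemma exists_mem_Ioc_succ {α : Type*} [LinearOrder α] {a : ℕ → α} {y : α} (h0 : y ≤ a 0)
    (hex : ∃ n, a n < y) : ∃ n, y ∈ Ioc (a (n + 1)) (a n) := by
  obtain ⟨n, hn⟩ := hex
  induction n with
  | zero => exact absurd h0 (not_le.2 hn)
  | succ n ih =>
    by_cases h : a n < y
    · exact ih h
    · exact ⟨n, hn, not_lt.1 h⟩

lemma div_le_exp_abs_sub_div {a b m : ℝ} (hm : 0 < m) (hmb : m ≤ b) :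
    a / b ≤ Real.exp (|a - b| / m) := by
  have hb : 0 < b := hm.trans_le hmb
  calc a / b = (a - b) / b + 1 := by field_simp; ring
    _ ≤ |a - b| / m + 1 := by
        grw [(div_le_div_of_nonneg_right (le_abs_self _) hb.le).trans
          (div_le_div_of_nonneg_left (abs_nonneg _) hm hmb)]
    _ ≤ Real.exp (|a - b| / m) := Real.add_one_le_exp _

lemma exists_abs_sub_eq_mul_abs_sub {f f' : ℝ → ℝ} {a b u v : ℝ}
    (hf : ∀ x ∈ Icc a b, HasDerivAt f (f' x) x) (hu : u ∈ Icc a b) (hv : v ∈ Icc a b) :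
    ∃ c ∈ Icc a b, |f u - f v| = |f' c| * |u - v| := by
  wlog huv : u ≤ v generalizing u v
  · obtain ⟨c, hc, h⟩ := this hv hu (le_of_not_ge huv)
    exact ⟨c, hc, by rw [abs_sub_comm, h, abs_sub_comm v]⟩
  obtain rfl | huv := huv.eq_or_lt
  · exact ⟨u, hu, by simp⟩
  have hsub : Icc u v ⊆ Icc a b := Icc_subset_Icc hu.1 hv.2
  obtain ⟨c, hc, hslope⟩ := exists_hasDerivAt_eq_slope f f' huv
    (fun x hx => (hf x (hsub hx)).continuousAt.continuousWithinAt)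
    (fun x hx => hf x (hsub (Ioo_subset_Icc_self hx)))
  refine ⟨c, hsub (Ioo_subset_Icc_self hc), ?_⟩
  rw [hslope, abs_div, abs_sub_comm u,
    div_mul_cancel₀ _ (abs_pos.2 (sub_ne_zero.2 huv.ne')).ne', abs_sub_comm]

lemma exists_abs_apply_sub_le_of_apply_eq {f f' : ℝ → ℝ} {p q u : ℝ}
    (hf : ∀ x ∈ Icc p q, HasDerivAt f (f' x) x) (hp : f p = p) (hu : u ∈ Icc p q) :
    ∃ ξ ∈ Icc p q, |f u - u| ≤ |f' ξ - 1| * (q - p) := by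
  obtain ⟨ξ, hξ, heq⟩ := exists_abs_sub_eq_mul_abs_sub (f := fun x => f x - x)
    (f' := fun x => f' x - 1) (fun x hx => (hf x hx).sub (hasDerivAt_id x)) hu
    ⟨le_rfl, hu.1.trans hu.2⟩
  refine ⟨ξ, hξ, ?_⟩
  simp only [hp, sub_self, sub_zero] at heq
  rw [heq]
  gcongr
  rw [abs_of_nonneg (sub_nonneg.2 hu.1)]
  linarith [hu.2]

lemma HasDerivWithinAt.eq_one_of_tendsto_fixed {f : ℝ → ℝ} {f' x : ℝ} {s : Set ℝ}
    {q : ℕ → ℝ} (hf : HasDerivWithinAt f f' s x) (hx : f x = x)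
    (hq : Tendsto q atTop (𝓝[s \ {x}] x))
    (hfix : ∀ n, f (q n) = q n) : f' = 1 := by
  have hslope : Tendsto (fun n => slope f x (q n)) atTop (𝓝 f') :=
    (hasDerivWithinAt_iff_tendsto_slope.1 hf).comp hq
  have hone : ∀ᶠ n in atTop, 1 = slope f x (q n) := by
    filter_upwards [hq self_mem_nhdsWithin] with n hn
    rw [slope_def_field, hfix, hx, div_self (sub_ne_zero.2 hn.2)]
  exact tendsto_nhds_unique hslope (tendsto_const_nhds.congr' hone)

noncomputable def derivIco (f : ℝ → ℝ) : ℝ → ℝ := derivWithin f (Ico 0 1)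

noncomputable def derivIterate (f : ℝ → ℝ) (n : ℕ) (x : ℝ) : ℝ :=
  ∏ k ∈ Finset.range n, derivIco f (f^[k] x)

section derivIco

variable {r : ℕ∞} {f : ℝ → ℝ}

lemma hasDerivWithinAt_derivIco (hf : ContDiffOn ℝ r f (Ico 0 1)) (hr : 1 ≤ r) {x : ℝ}
    (hx : x ∈ Ico 0 1) : HasDerivWithinAt f (derivIco f x) (Ico 0 1) x :=
  ((hf.differentiableOn (by simpa using (one_pos.trans_le hr).ne')) x hx).hasDerivWithinAt

lemma hasDerivAt_derivIco (hf : ContDiffOn ℝ r f (Ico 0 1)) (hr : 1 ≤ r) {x : ℝ}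
    (hx : x ∈ Ioo 0 1) : HasDerivAt f (derivIco f x) x :=
  (hasDerivWithinAt_derivIco hf hr (Ioo_subset_Ico_self hx)).hasDerivAt
    (Ico_mem_nhds hx.1 hx.2)

lemma continuousOn_derivIco (hf : ContDiffOn ℝ r f (Ico 0 1)) (hr : 1 ≤ r) :
    ContinuousOn (derivIco f) (Ico 0 1) :=
  hf.continuousOn_derivWithin (uniqueDiffOn_Ico 0 1) (by exact_mod_cast hr)

lemma exists_lipschitzOnWith_derivIco (hf : ContDiffOn ℝ r f (Ico 0 1)) (hr : 2 ≤ r) {b : ℝ}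
    (hb : b < 1) : ∃ C, LipschitzOnWith C (derivIco f) (Icc 0 b) :=
  ((hf.derivWithin (m := 1) (uniqueDiffOn_Ico 0 1) (WithTop.coe_le_coe.2 hr)).mono
    (Icc_subset_Ico_right hb)).exists_lipschitzOnWith one_ne_zero (convex_Icc 0 b) isCompact_Icc

end derivIco

lemma Commute.apply_iterate {α : Type*} {g h : Equiv.Perm α} (hc : Commute g h) (n : ℕ)
    (x : α) : h (g^[n] x) = g^[n] (h x) :=
  ((Function.Commute.iterate_left (fun x => DFunLike.congr_fun hc.eq x) n) x).symm

namespace IsIcoDiff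

variable {r : ℕ∞} {g : Equiv.Perm ℝ}

lemma mapsTo_Ico (hg : IsIcoDiff r g) : MapsTo g (Ico 0 1) (Ico 0 1) := hg.2.2.1.mapsTo

lemma strictMono (hg : IsIcoDiff r g) : StrictMono g := by
  intro x y hxy
  by_cases hx : x ∈ Ico (0 : ℝ) 1
  · by_cases hy : y ∈ Ico (0 : ℝ) 1
    · exact hg.2.2.2.1 hx hy hxy
    · have hy1 : 1 ≤ y := by_contra fun h => hy ⟨hx.1.trans hxy.le, not_le.1 h⟩
      rw [hg.2.2.2.2 y hy]
      exact (hg.mapsTo_Ico hx).2.trans_le hy1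
  · rw [hg.2.2.2.2 x hx]
    by_cases hy : y ∈ Ico (0 : ℝ) 1
    · have hx0 : x < 0 := by_contra fun h => hx ⟨not_lt.1 h, hxy.trans hy.2⟩
      exact hx0.trans_le (hg.mapsTo_Ico hy).1
    · rwa [hg.2.2.2.2 y hy]

lemma map_zero (hg : IsIcoDiff r g) : g 0 = 0 := by
  obtain ⟨x, hx, hgx⟩ := hg.2.2.1.surjOn (left_mem_Ico.2 zero_lt_one)
  have hg0 : g x ≤ g 0 := hgx ▸ (hg.mapsTo_Ico (left_mem_Ico.2 zero_lt_one)).1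
  rwa [(hg.strictMono.le_iff_le.1 hg0).antisymm hx.1] at hgx

lemma mapsTo_Ioo (hg : IsIcoDiff r g) : MapsTo g (Ioo 0 1) (Ioo 0 1) := fun _ hx =>
  ⟨hg.map_zero ▸ hg.strictMono hx.1, (hg.mapsTo_Ico (Ioo_subset_Ico_self hx)).2⟩

lemma inv (hg : IsIcoDiff r g) : IsIcoDiff r g⁻¹ :=
  ⟨hg.2.1, hg.1, g.bijOn_symm.2 hg.2.2.1,
    fun _ _ _ _ hxy => hg.strictMono.lt_iff_lt.1 (by simpa using hxy),
    fun x hx => g.symm_apply_eq.2 (hg.2.2.2.2 x hx).symm⟩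

lemma eq_one_of_forall_mem_Ioo (hg : IsIcoDiff r g) (hfix : ∀ x ∈ Ioo 0 1, g x = x) :
    g = 1 := by
  refine Equiv.Perm.ext fun x => ?_
  by_cases hx : x ∈ Ico (0 : ℝ) 1
  · obtain rfl | hx0 := hx.1.eq_or_lt
    · exact hg.map_zero
    · exact hfix x ⟨hx0, hx.2⟩
  · exact hg.2.2.2.2 x hx

lemma contracting_or_expanding (hg : IsIcoDiff r g) (hfree : ∀ x ∈ Ioo 0 1, g x ≠ x) :
    (∀ x ∈ Ioo 0 1, g x < x) ∨ ∀ x ∈ Ioo 0 1, x < g x := by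
  by_contra! h
  obtain ⟨⟨x, hx, hxg⟩, y, hy, hyg⟩ := h
  obtain ⟨z, hz, hgz⟩ := isPreconnected_Ioo.intermediate_value₂ hy hx
    (hg.1.continuousOn.mono Ioo_subset_Ico_self) continuousOn_id hyg hxg
  exact hfree z hz hgz

lemma tendsto_iterate_zero (hg : IsIcoDiff r g) (hcon : ∀ x ∈ Ioo 0 1, g x < x) {x : ℝ}
    (hx : x ∈ Ioo 0 1) :
    Tendsto (fun n => g^[n] x) atTop (𝓝 0) := by
  have hmem : ∀ n, g^[n] x ∈ Ioo 0 1 := fun n => hg.mapsTo_Ioo.iterate n hx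
  have hanti : Antitone fun n => g^[n] x := antitone_nat_of_succ_le fun n => by
    rw [iterate_succ_apply']
    exact (hcon _ (hmem n)).le
  have hbdd : BddBelow (range fun n => g^[n] x) :=
    ⟨0, by rintro _ ⟨n, rfl⟩; exact (hmem n).1.le⟩
  have hlim := tendsto_atTop_ciInf hanti hbdd
  have hL0 : 0 ≤ ⨅ n, g^[n] x := le_ciInf fun n => (hmem n).1.le
  have hL1 : ⨅ n, g^[n] x < 1 := (ciInf_le hbdd 0).trans_lt hx.2
  obtain hL | hL := hL0.eq_or_lt
  · rwa [← hL] at hlim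
  -- a positive limit would be a fixed point of `g`
  have hfix := isFixedPt_of_tendsto_iterate hlim
    (hg.1.continuousOn.continuousAt (Ico_mem_nhds hL hL1))
  exact absurd hfix (hcon _ ⟨hL, hL1⟩).ne

lemma mapsTo_Icc (hg : IsIcoDiff r g) (hcon : ∀ x ∈ Ioo 0 1, g x < x) {b : ℝ}
    (hb : b ∈ Ioo 0 1) : MapsTo g (Icc 0 b) (Icc 0 b) :=
  fun _ hx => ⟨hg.map_zero ▸ hg.strictMono.monotone hx.1,
    (hg.strictMono.monotone hx.2).trans (hcon b hb).le⟩

lemma sum_abs_iterate_sub_le (hg : IsIcoDiff r g) {b u v : ℝ} (hb : b ∈ Ioo 0 1)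
    (hu : u ∈ Icc (g b) b) (hv : v ∈ Icc (g b) b) (n : ℕ) :
    ∑ k ∈ Finset.range n, |g^[k] u - g^[k] v| ≤ b := by
  have hmono : ∀ k, Monotone g^[k] := hg.strictMono.monotone.iterate
  -- `g^[k] u` and `g^[k] v` lie in `[g^[k + 1] b, g^[k] b]`
  have hk : ∀ k, |g^[k] u - g^[k] v| ≤ g^[k] b - g^[k + 1] b := fun k => by
    rw [iterate_succ_apply, abs_sub_le_iff]
    constructor <;> linarith [hmono k hu.1, hmono k hu.2, hmono k hv.1, hmono k hv.2]
  calc ∑ k ∈ Finset.range n, |g^[k] u - g^[k] v|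
      ≤ ∑ k ∈ Finset.range n, (g^[k] b - g^[k + 1] b) := Finset.sum_le_sum fun k _ => hk k
    _ = b - g^[n] b := Finset.sum_range_sub' (fun k => g^[k] b) n
    _ ≤ b := by linarith [(hg.mapsTo_Ioo.iterate n hb).1]

lemma derivIco_pos (hg : IsIcoDiff r g) (hr : 1 ≤ r) {x : ℝ} (hx : x ∈ Ico 0 1) :
    0 < derivIco g x := by
  have hd := hasDerivWithinAt_derivIco hg.1 hr hx
  have hu := uniqueDiffOn_Ico 0 1 x hx
  refine (hd.nonneg_of_monotoneOn hu.accPt (hg.strictMono.monotone.monotoneOn _)).lt_of_ne' ?_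
  -- the chain rule for `g⁻¹ ∘ g = id` gives `(g⁻¹)'(g x) * g'(x) = 1`
  have hcomp :=
    (hasDerivWithinAt_derivIco hg.2.1 hr (hg.mapsTo_Ico hx)).comp x hd hg.mapsTo_Ico
  rw [g.symm_comp_self] at hcomp
  exact right_ne_zero_of_mul_eq_one (hu.eq_deriv _ hcomp (hasDerivWithinAt_id x _))

lemma derivIterate_pos (hg : IsIcoDiff r g) (hr : 1 ≤ r) {x : ℝ} (hx : x ∈ Ico 0 1)
    (n : ℕ) : 0 < derivIterate g n x :=
  Finset.prod_pos fun k _ => hg.derivIco_pos hr (hg.mapsTo_Ico.iterate k hx)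

lemma hasDerivAt_iterate (hg : IsIcoDiff r g) (hr : 1 ≤ r) {x : ℝ} (hx : x ∈ Ioo 0 1)
    (n : ℕ) : HasDerivAt g^[n] (derivIterate g n x) x := by
  induction n with
  | zero => simpa [derivIterate] using hasDerivAt_id x
  | succ n ih =>
    have h := (hasDerivAt_derivIco hg.1 hr (hg.mapsTo_Ioo.iterate n hx)).comp x ih
    rw [derivIterate, Finset.prod_range_succ, mul_comm, iterate_succ']
    exact h

lemma exists_abs_iterate_sub_eq (hg : IsIcoDiff r g) (hr : 1 ≤ r) {a b u v : ℝ}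
    (hab : Icc a b ⊆ Ioo 0 1) (hu : u ∈ Icc a b) (hv : v ∈ Icc a b) (n : ℕ) :
    ∃ c ∈ Icc a b, |g^[n] u - g^[n] v| = derivIterate g n c * |u - v| := by
  obtain ⟨c, hc, h⟩ := exists_abs_sub_eq_mul_abs_sub
    (fun x hx => hg.hasDerivAt_iterate hr (hab hx) n) hu hv
  exact ⟨c, hc, by rw [h, abs_of_pos (hg.derivIterate_pos hr (Ioo_subset_Ico_self (hab hc)) n)]⟩

lemma exists_derivIterate_le_mul (hg : IsIcoDiff 2 g)
    (hcon : ∀ x ∈ Ioo 0 1, g x < x) {b : ℝ} (hb : b ∈ Ioo 0 1) :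
    ∃ K > 0, ∀ n, ∀ u ∈ Icc (g b) b, ∀ v ∈ Icc (g b) b,
      derivIterate g n u ≤ K * derivIterate g n v := by
  have hr : (1 : ℕ∞) ≤ 2 := by norm_num
  have hsub : Icc 0 b ⊆ Ico 0 1 := Icc_subset_Ico_right hb.2
  obtain ⟨C, hC⟩ := exists_lipschitzOnWith_derivIco hg.1 le_rfl hb.2
  obtain ⟨z, hz, hmin⟩ := isCompact_Icc.exists_isMinOn (nonempty_Icc.2 hb.1.le)
    ((continuousOn_derivIco hg.1 hr).mono hsub)
  have hm := hg.derivIco_pos hr (hsub hz)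
  have hfund : Icc (g b) b ⊆ Icc 0 b :=
    Icc_subset_Icc_left (hg.mapsTo_Icc hcon hb ⟨hb.1.le, le_rfl⟩).1
  refine ⟨Real.exp (C * b / derivIco g z), Real.exp_pos _, fun n u hu v hv => ?_⟩
  have hiter : ∀ {w}, w ∈ Icc (g b) b → ∀ k, g^[k] w ∈ Icc 0 b := fun hw k =>
    (hg.mapsTo_Icc hcon hb).iterate k (hfund hw)
  have hterm : ∀ k, derivIco g (g^[k] u) / derivIco g (g^[k] v)
      ≤ Real.exp (C * |g^[k] u - g^[k] v| / derivIco g z) := fun k => by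
    refine (div_le_exp_abs_sub_div hm (hmin (hiter hv k))).trans (Real.exp_le_exp.2 ?_)
    gcongr
    simpa only [Real.dist_eq] using hC.dist_le_mul _ (hiter hu k) _ (hiter hv k)
  rw [← div_le_iff₀ (hg.derivIterate_pos hr (hsub (hfund hv)) n), derivIterate, derivIterate,
    ← Finset.prod_div_distrib]
  calc ∏ k ∈ Finset.range n, derivIco g (g^[k] u) / derivIco g (g^[k] v)
      ≤ ∏ k ∈ Finset.range n, Real.exp (C * |g^[k] u - g^[k] v| / derivIco g z) :=
        Finset.prod_le_prod (fun k _ => (div_pos (hg.derivIco_pos hr (hsub (hiter hu k)))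
          (hg.derivIco_pos hr (hsub (hiter hv k)))).le) fun k _ => hterm k
    _ = Real.exp (C * (∑ k ∈ Finset.range n, |g^[k] u - g^[k] v|) / derivIco g z) := by
        rw [← Real.exp_sum, Finset.mul_sum, Finset.sum_div]
    _ ≤ Real.exp (C * b / derivIco g z) := by
        gcongr
        exact hg.sum_abs_iterate_sub_le hb hu hv n

lemma exists_abs_iterate_sub_mul_le (hg : IsIcoDiff 2 g)
    (hcon : ∀ x ∈ Ioo 0 1, g x < x) {b : ℝ} (hb : b ∈ Ioo 0 1) :
    ∃ K > 0, ∀ n, ∀ u ∈ Icc (g b) b, ∀ v ∈ Icc (g b) b, ∀ x ∈ Icc (g b) b,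
      ∀ y ∈ Icc (g b) b,
        |g^[n] u - g^[n] v| * |x - y| ≤ K * |g^[n] x - g^[n] y| * |u - v| := by
  have hr : (1 : ℕ∞) ≤ 2 := by norm_num
  have hfund : Icc (g b) b ⊆ Ioo 0 1 := fun w hw =>
    ⟨(hg.mapsTo_Ioo hb).1.trans_le hw.1, hw.2.trans_lt hb.2⟩
  obtain ⟨K, hK, hdist⟩ := hg.exists_derivIterate_le_mul hcon hb
  refine ⟨K, hK, fun n u hu v hv x hx y hy => ?_⟩
  obtain ⟨c, hc, huv⟩ := hg.exists_abs_iterate_sub_eq hr hfund hu hv n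
  obtain ⟨d, hd, hxy⟩ := hg.exists_abs_iterate_sub_eq hr hfund hx hy n
  rw [huv, hxy]
  calc derivIterate g n c * |u - v| * |x - y|
      ≤ K * derivIterate g n d * |u - v| * |x - y| := by gcongr; exact hdist n c hc d hd
    _ = K * (derivIterate g n d * |x - y|) * |u - v| := by ring

lemma derivIco_zero_eq_one {r' : ℕ∞} {h : Equiv.Perm ℝ} (hg : IsIcoDiff r' g)
    (hcon : ∀ x ∈ Ioo 0 1, g x < x) (hh : IsIcoDiff r h) (hr : 1 ≤ r) (hc : Commute g h)
    {b : ℝ} (hb : b ∈ Ioo 0 1) (hfix : h b = b) : derivIco h 0 = 1 := by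
  have hmem : ∀ n, g^[n] b ∈ Ioo 0 1 := fun n => hg.mapsTo_Ioo.iterate n hb
  refine (hasDerivWithinAt_derivIco hh.1 hr (left_mem_Ico.2 zero_lt_one))
    |>.eq_one_of_tendsto_fixed hh.map_zero
      (tendsto_nhdsWithin_iff.2 ⟨hg.tendsto_iterate_zero hcon hb, ?_⟩)
    fun n => by rw [hc.apply_iterate, hfix]
  exact Eventually.of_forall fun n => ⟨Ioo_subset_Ico_self (hmem n), (hmem n).1.ne'⟩

lemma exists_abs_apply_sub_le_mul_abs_derivIco_sub_one {h : Equiv.Perm ℝ}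
    (hg : IsIcoDiff 2 g) (hcon : ∀ x ∈ Ioo 0 1, g x < x) (hh : IsIcoDiff r h) (hr : 1 ≤ r)
    (hc : Commute g h) {b y : ℝ} (hb : b ∈ Ioo 0 1) (hfix : h b = b) (hy : y ∈ Icc (g b) b) :
    ∃ K, ∀ n, ∃ ξ ∈ Icc (g^[n] (g b)) (g^[n] b),
      |h y - y| ≤ K * |derivIco h ξ - 1| := by
  have hgb : g b < b := hcon b hb
  have hfix_iter : ∀ n, h (g^[n] b) = g^[n] b := fun n => by rw [hc.apply_iterate, hfix]
  have hfix_g : h (g b) = g b := hfix_iter 1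
  have hhy : h y ∈ Icc (g b) b :=
    ⟨hfix_g ▸ hh.strictMono.monotone hy.1, hfix ▸ hh.strictMono.monotone hy.2⟩
  obtain ⟨K, hK, hdist⟩ := hg.exists_abs_iterate_sub_mul_le hcon hb
  refine ⟨K * (b - g b), fun n => ?_⟩
  have hmono := hg.strictMono.iterate n
  have hsub : Icc (g^[n] (g b)) (g^[n] b) ⊆ Ioo 0 1 := fun w hw =>
    ⟨(hg.mapsTo_Ioo.iterate n (hg.mapsTo_Ioo hb)).1.trans_le hw.1,
      hw.2.trans_lt (hg.mapsTo_Ioo.iterate n hb).2⟩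
  obtain ⟨ξ, hξ, hmove⟩ := exists_abs_apply_sub_le_of_apply_eq
    (fun w hw => hasDerivAt_derivIco hh.1 hr (hsub hw))
    (by rw [← iterate_succ_apply, hfix_iter]) ⟨hmono.monotone hy.1, hmono.monotone hy.2⟩
  refine ⟨ξ, hξ, ?_⟩
  have hlen : 0 < g^[n] b - g^[n] (g b) := sub_pos.2 (hmono hgb)
  -- distortion: `gⁿ` shrinks `|h y - y|` and `b - g b` by comparable factors
  have hratio := hdist n b ⟨hgb.le, le_rfl⟩ (g b) ⟨le_rfl, hgb.le⟩ _ hhy _ hy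
  rw [abs_of_pos hlen, abs_of_pos (sub_pos.2 hgb), ← hc.apply_iterate] at hratio
  refine le_of_mul_le_mul_left ?_ hlen
  calc (g^[n] b - g^[n] (g b)) * |h y - y|
      ≤ K * (b - g b) * |h (g^[n] y) - g^[n] y| := by linarith
    _ ≤ K * (b - g b) * (|derivIco h ξ - 1| * (g^[n] b - g^[n] (g b))) := by gcongr
    _ = (g^[n] b - g^[n] (g b)) * (K * (b - g b) * |derivIco h ξ - 1|) := by ring

lemma apply_eq_self_of_mem_Icc {h : Equiv.Perm ℝ} (hg : IsIcoDiff 2 g)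
    (hcon : ∀ x ∈ Ioo 0 1, g x < x) (hh : IsIcoDiff r h) (hr : 1 ≤ r) (hc : Commute g h)
    {b y : ℝ} (hb : b ∈ Ioo 0 1) (hfix : h b = b) (hy : y ∈ Icc (g b) b) : h y = y := by
  have hgb := hg.mapsTo_Ioo hb
  obtain ⟨K, hK⟩ :=
    hg.exists_abs_apply_sub_le_mul_abs_derivIco_sub_one hcon hh hr hc hb hfix hy
  choose ξ hξ hbound using hK
  have hξ0 : Tendsto ξ atTop (𝓝[Ico 0 1] 0) := by
    refine tendsto_nhdsWithin_iff.2 ⟨tendsto_of_tendsto_of_tendsto_of_le_of_le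
      (hg.tendsto_iterate_zero hcon hgb) (hg.tendsto_iterate_zero hcon hb)
      (fun n => (hξ n).1) (fun n => (hξ n).2), Eventually.of_forall fun n => ?_⟩
    exact ⟨((hg.mapsTo_Ioo.iterate n hgb).1.trans_le (hξ n).1).le,
      (hξ n).2.trans_lt (hg.mapsTo_Ioo.iterate n hb).2⟩
  have hlim : Tendsto (fun n => K * |derivIco h (ξ n) - 1|) atTop (𝓝 0) := by
    have := ((continuousOn_derivIco hh.1 hr) 0 (left_mem_Ico.2 zero_lt_one)).tendsto.comp hξ0
    rw [hg.derivIco_zero_eq_one hcon hh hr hc hb hfix] at this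
    simpa using (this.sub_const 1).abs.const_mul K
  by_contra hne
  obtain ⟨n, hn⟩ := (hlim.eventually (gt_mem_nhds (abs_sub_pos.2 hne))).exists
  exact (hbound n).not_gt hn

lemma eq_one_of_apply_eq_self {h : Equiv.Perm ℝ} (hg : IsIcoDiff 2 g)
    (hcon : ∀ x ∈ Ioo 0 1, g x < x) (hh : IsIcoDiff r h) (hr : 1 ≤ r) (hc : Commute g h)
    {b : ℝ} (hb : b ∈ Ioo 0 1) (hfix : h b = b) : h = 1 := by
  refine hh.eq_one_of_forall_mem_Ioo fun y hy => ?_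
  -- push `y` below `b`, then into a fundamental domain `[g^[k+1] b, g^[k] b]`
  obtain ⟨n, hn⟩ := ((hg.tendsto_iterate_zero hcon hy).eventually (ge_mem_nhds hb.1)).exists
  have hyn := hg.mapsTo_Ioo.iterate n hy
  obtain ⟨k, hk⟩ := exists_mem_Ioc_succ (a := fun k => g^[k] b) hn
    ((hg.tendsto_iterate_zero hcon hb).eventually (gt_mem_nhds hyn.1)).exists
  have hmoved := hg.apply_eq_self_of_mem_Icc hcon hh hr hc (hg.mapsTo_Ioo.iterate k hb)
    (by rw [hc.apply_iterate, hfix]) (y := g^[n] y)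
    ⟨by simpa only [iterate_succ_apply'] using hk.1.le, hk.2⟩
  rw [hc.apply_iterate] at hmoved
  exact (g.injective.iterate n) hmoved

end IsIcoDiff

/-- Kopell's Lemma: if g, h are commuting C² diffeomorphisms of [0,1), g has no fixed
point in (0,1), and h ≠ id, then h has no fixed point in (0,1). -/
theorem kopell (g h : Equiv.Perm ℝ) (hg : IsIcoDiff 2 g) (hh : IsIcoDiff 2 h)
    (hcomm : Commute g h)
    (hgfree : ∀ x ∈ Set.Ioo (0:ℝ) 1, g x ≠ x)
    (hne : h ≠ 1) :
    ∀ x ∈ Set.Ioo (0:ℝ) 1, h x ≠ x := by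
  intro x hx hfix
  apply hne
  rcases hg.contracting_or_expanding hgfree with hcon | hexp
  · exact hg.eq_one_of_apply_eq_self hcon hh (by norm_num) hcomm hx hfix
  · have hcon : ∀ y ∈ Ioo 0 1, g⁻¹ y < y := fun y hy => by
      simpa using hexp _ (hg.inv.mapsTo_Ioo hy)
    exact hg.inv.eq_one_of_apply_eq_self hcon hh (by norm_num) hcomm.inv_left hx hfix
end

section
/- Let U and V be closed proper subsets of [0,1), each with nonempty interior complement in a way that the fixing subgroups G^U and G^V are nonabelian. Then the subgroup of Diff₊^r([0,1)) (r ≥ 2) generated by G^U and G^V has nonabelian centralizer if and only if U ∩ V contains a nonempty open set. -/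
open Set Metric Filter Topology
open scoped ContDiff

theorem exists_contDiff_small_bump (c : ℝ) {ρ : ℝ} (hρ : 0 < ρ) :
    ∃ φ : ℝ → ℝ, ContDiff ℝ ∞ φ ∧ HasCompactSupport φ ∧ (∀ z ∉ ball c ρ, φ z = 0) ∧
      φ c ≠ 0 ∧ ∀ x, |deriv φ x| < 1 := by
  let β : ContDiffBump c := ⟨ρ / 2, ρ, half_pos hρ, half_lt_self hρ⟩
  have hβ : ContDiff ℝ ∞ β := β.contDiff
  obtain ⟨M, hM⟩ := β.hasCompactSupport.deriv.exists_bound_of_continuous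
    (hβ.continuous_deriv (by simp))
  have hM0 : 0 ≤ M := (norm_nonneg _).trans (hM c)
  refine ⟨fun x => (M + 1)⁻¹ * β x, contDiff_const.mul hβ, β.hasCompactSupport.mul_left,
    fun z hz => ?_, ?_, fun x => ?_⟩
  · simp only [β.zero_of_le_dist (not_lt.1 hz), mul_zero]
  · simp only [β.one_of_mem_closedBall (mem_closedBall_self (half_pos hρ).le), mul_one]
    positivity
  · rw [deriv_const_mul _ (hβ.differentiable (by simp) x), abs_mul, abs_inv,
      abs_of_pos (by positivity : (0:ℝ) < M + 1), inv_mul_lt_iff₀ (by positivity), mul_one]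
    exact (hM x).trans_lt (lt_add_one M)

theorem exists_orderIso_add_of_abs_deriv_lt_one {φ : ℝ → ℝ} (hφ : ContDiff ℝ ∞ φ)
    (hsupp : HasCompactSupport φ) (hderiv : ∀ x, |deriv φ x| < 1) :
    ∃ e : ℝ ≃o ℝ, (∀ x, e x = x + φ x) ∧ ContDiff ℝ ∞ e ∧ ContDiff ℝ ∞ e.symm := by
  have hdiff : Differentiable ℝ φ := hφ.differentiable (by simp)
  have hf : ContDiff ℝ ∞ (fun x => x + φ x) := contDiff_id.add hφ
  have hderiv_pos : ∀ x, 0 < 1 + deriv φ x := fun x => by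
    linarith [neg_abs_le (deriv φ x), hderiv x]
  have hhas : ∀ x, HasDerivAt (fun x => x + φ x) (1 + deriv φ x) x :=
    fun x => (hasDerivAt_id x).add (hdiff x).hasDerivAt
  have hmono : StrictMono (fun x => x + φ x) :=
    strictMono_of_deriv_pos fun x => (hhas x).deriv ▸ hderiv_pos x
  have hzero : Tendsto φ (cocompact ℝ) (𝓝 0) := hsupp.is_zero_at_infty
  have hsurj : Function.Surjective (fun x => x + φ x) :=
    hf.continuous.surjective (tendsto_id.atTop_add (hzero.mono_left atTop_le_cocompact))
      (tendsto_id.atBot_add (hzero.mono_left atBot_le_cocompact))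
  let e := StrictMono.orderIsoOfSurjective _ hmono hsurj
  exact ⟨e, fun x => rfl, hf,
    e.toHomeomorph.contDiff_symm_deriv (fun x => (hderiv_pos x).ne') hhas hf⟩

theorem exists_contDiff_orderIso_moving (c : ℝ) {ρ : ℝ} (hρ : 0 < ρ) :
    ∃ e : ℝ ≃o ℝ, ContDiff ℝ ∞ e ∧ ContDiff ℝ ∞ e.symm ∧ (∀ z ∉ ball c ρ, e z = z) ∧ e c ≠ c := by
  obtain ⟨φ, hφ, hsupp, hzero, hc, hderiv⟩ := exists_contDiff_small_bump c hρ
  obtain ⟨e, he, hesmooth, hesymm⟩ := exists_orderIso_add_of_abs_deriv_lt_one hφ hsupp hderiv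
  refine ⟨e, hesmooth, hesymm, fun z hz => ?_, ?_⟩
  · rw [he, hzero z hz, add_zero]
  · rwa [he, ne_eq, add_eq_left]

namespace Equiv.Perm

variable {α : Type*} {g h : Perm α}

theorem apply_mem_iff_of_forall_notMem_apply_eq {s : Set α} (hg : ∀ x ∉ s, g x = x) {x : α} :
    g x ∈ s ↔ x ∈ s := by
  by_cases hx : x ∈ s
  · refine iff_of_true ?_ hx
    by_contra hgx
    exact hgx (by rwa [g.injective (hg _ hgx)])
  · rw [hg x hx]

theorem commute_of_forall_mem_apply_eq_of_forall_notMem_apply_eq {s : Set α}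
    (hg : ∀ x ∈ s, g x = x) (hh : ∀ x ∉ s, h x = x) : Commute g h :=
  Disjoint.commute fun x => (em (x ∈ s)).imp (hg x) (hh x)

theorem _root_.Commute.perm_apply_apply_eq_self_iff (hgh : Commute g h) {x : α} :
    g (h x) = h x ↔ g x = x := by
  rw [← Perm.mul_apply, hgh.eq, Perm.mul_apply, h.apply_eq_iff_eq]

theorem exists_apply_ne_of_not_commute (hgh : ¬Commute g h) : ∃ x, g x ≠ x := by
  by_contra! hg
  obtain rfl : g = 1 := Equiv.ext hg
  exact hgh (Commute.one_left h)

theorem commute_of_mem_closure {S : Set (Perm α)} {s : Set α} (hS : ∀ g ∈ S, ∀ x ∈ s, g x = x)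
    (hh : ∀ x ∉ s, h x = x) {k : Perm α} (hk : k ∈ Subgroup.closure S) : Commute k h := by
  have hle : Subgroup.closure S ≤ Subgroup.centralizer {h} := (Subgroup.closure_le _).2 fun g hg =>
    Subgroup.mem_centralizer_singleton_iff.2
      (commute_of_forall_mem_apply_eq_of_forall_notMem_apply_eq (hS g hg) hh).eq
  exact Subgroup.mem_centralizer_singleton_iff.1 (hle hk)

end Equiv.Perm

def icoDiffFixing (r : ℕ∞) (U : Set ℝ) : Set (Equiv.Perm ℝ) :=
  {g | IsIcoDiff r g ∧ ∀ x ∈ U, g x = x}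

theorem OrderIso.isIcoDiff {r : ℕ∞} (e : ℝ ≃o ℝ) (he : ContDiff ℝ r e)
    (he' : ContDiff ℝ r e.symm) (hfix : ∀ x ∉ Ico (0 : ℝ) 1, e x = x) : IsIcoDiff r e.toEquiv :=
  ⟨he.contDiffOn, he'.contDiffOn,
    e.toEquiv.bijOn fun _ =>
      Equiv.Perm.apply_mem_iff_of_forall_notMem_apply_eq (g := e.toEquiv) hfix,
    e.strictMono.strictMonoOn _, hfix⟩

theorem exists_isIcoDiff_apply_ne (r : ℕ∞) {O : Set ℝ} (hO : IsOpen O) (hOI : O ⊆ Ico 0 1)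
    {c : ℝ} (hc : c ∈ O) : ∃ g : Equiv.Perm ℝ, IsIcoDiff r g ∧ (∀ z ∉ O, g z = z) ∧ g c ≠ c := by
  obtain ⟨ρ, hρ, hball⟩ := Metric.isOpen_iff.1 hO c hc
  obtain ⟨e, he, he', hfix, hec⟩ := exists_contDiff_orderIso_moving c hρ
  have hfixO : ∀ z ∉ O, e z = z := fun z hz => hfix z fun hzb => hz (hball hzb)
  have hr : (r : WithTop ℕ∞) ≤ ∞ := by exact_mod_cast le_top
  exact ⟨e.toEquiv, e.isIcoDiff (he.of_le hr) (he'.of_le hr)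
    (fun z hz => hfixO z fun hzO => hz (hOI hzO)), hfixO, hec⟩

theorem exists_not_commute_isIcoDiff (r : ℕ∞) {O : Set ℝ} (hO : IsOpen O) (hOI : O ⊆ Ico 0 1)
    (hne : O.Nonempty) : ∃ h₁ h₂ : Equiv.Perm ℝ, IsIcoDiff r h₁ ∧ IsIcoDiff r h₂ ∧
      (∀ z ∉ O, h₁ z = z) ∧ (∀ z ∉ O, h₂ z = z) ∧ ¬Commute h₁ h₂ := by
  obtain ⟨m, hm⟩ := hne
  obtain ⟨h₂, hh₂, hfix₂, hm₂⟩ := exists_isIcoDiff_apply_ne r hO hOI hm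
  have hq : h₂ m ∈ O \ {m} :=
    ⟨(Equiv.Perm.apply_mem_iff_of_forall_notMem_apply_eq hfix₂).2 hm, hm₂⟩
  obtain ⟨h₁, hh₁, hfix₁, hq₁⟩ :=
    exists_isIcoDiff_apply_ne r (hO.sdiff isClosed_singleton) (sdiff_subset.trans hOI) hq
  refine ⟨h₁, h₂, hh₁, hh₂, fun z hz => hfix₁ z fun hzO => hz hzO.1, hfix₂, fun hc => hq₁ ?_⟩
  exact hc.perm_apply_apply_eq_self_iff.2 (hfix₁ m fun hmO => hmO.2 rfl)

namespace IsIcoDiff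

variable {r : ℕ∞} {h : Equiv.Perm ℝ}

theorem apply_zero (hh : IsIcoDiff r h) : h 0 = 0 := by
  obtain ⟨-, -, hbij, hmono, -⟩ := hh
  have h0 : (0 : ℝ) ∈ Ico (0 : ℝ) 1 := left_mem_Ico.2 one_pos
  obtain ⟨y, hy, hhy⟩ := hbij.surjOn h0
  rcases hy.1.eq_or_lt with rfl | hy0
  · exact hhy
  · exact absurd (hhy ▸ hmono h0 hy hy0) (not_lt.2 (hbij.mapsTo h0).1)

theorem mem_Ioo_of_apply_ne (hh : IsIcoDiff r h) {x : ℝ} (hx : h x ≠ x) : x ∈ Ioo 0 1 := by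
  have hxI : x ∈ Ico (0 : ℝ) 1 := by
    by_contra hxI
    exact hx (hh.2.2.2.2 x hxI)
  refine ⟨hxI.1.lt_of_ne ?_, hxI.2⟩
  rintro rfl
  exact hx hh.apply_zero

theorem eventually_apply_ne (hh : IsIcoDiff r h) {x : ℝ} (hx : h x ≠ x) :
    ∀ᶠ z in 𝓝 x, h z ≠ z := by
  have hxI := hh.mem_Ioo_of_apply_ne hx
  have hcont : ContinuousAt h x := hh.1.continuousOn.continuousAt (Ico_mem_nhds hxI.1 hxI.2)
  filter_upwards [(hcont.sub continuousAt_id).eventually_ne (sub_ne_zero.2 hx)] with z hz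
  exact sub_ne_zero.1 hz

theorem mem_of_apply_ne_of_commute {U : Set ℝ}
    (hUcl : ∀ x ∈ Ico (0 : ℝ) 1, x ∈ closure U → x ∈ U) (hh : IsIcoDiff r h)
    (hcomm : ∀ g ∈ icoDiffFixing r U, Commute g h) {x : ℝ} (hx : h x ≠ x) : x ∈ U := by
  have hxI := hh.mem_Ioo_of_apply_ne hx
  by_contra hxU
  let O : Set ℝ := (Ioo 0 1 ∩ (closure U)ᶜ) \ {h x}
  have hO : IsOpen O := (isOpen_Ioo.inter isClosed_closure.isOpen_compl).sdiff isClosed_singleton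
  have hxO : x ∈ O := ⟨⟨hxI, fun hcl => hxU (hUcl x (Ioo_subset_Ico_self hxI) hcl)⟩, hx.symm⟩
  obtain ⟨g, hg, hfix, hgx⟩ :=
    exists_isIcoDiff_apply_ne r hO (fun z hz => Ioo_subset_Ico_self hz.1.1) hxO
  have hgU : g ∈ icoDiffFixing r U :=
    ⟨hg, fun u hu => hfix u fun huO => huO.1.2 (subset_closure hu)⟩
  exact hgx ((hcomm g hgU).perm_apply_apply_eq_self_iff.1 (hfix (h x) fun hhx => hhx.2 rfl))

end IsIcoDiff

theorem generated_fixing_subgroups_centralizer_general (r : ℕ∞) (U V : Set ℝ)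
    (hU : U ⊆ Set.Ico 0 1)
    (hUcl : ∀ x ∈ Set.Ico (0:ℝ) 1, x ∈ closure U → x ∈ U)
    (hVcl : ∀ x ∈ Set.Ico (0:ℝ) 1, x ∈ closure V → x ∈ V) :
    (∃ h₁ h₂ : Equiv.Perm ℝ, IsIcoDiff r h₁ ∧ IsIcoDiff r h₂ ∧
      (∀ k ∈ Subgroup.closure
          ({g : Equiv.Perm ℝ | IsIcoDiff r g ∧ ∀ x ∈ U, g x = x} ∪
           {g : Equiv.Perm ℝ | IsIcoDiff r g ∧ ∀ x ∈ V, g x = x}),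
        Commute k h₁ ∧ Commute k h₂) ∧
      ¬Commute h₁ h₂) ↔
    ∃ a b : ℝ, a < b ∧ Set.Ioo a b ⊆ U ∩ V := by
  constructor
  · rintro ⟨h₁, _, hh₁, -, hcen, hnc⟩
    obtain ⟨x, hx⟩ := Equiv.Perm.exists_apply_ne_of_not_commute hnc
    have hcommU : ∀ g ∈ icoDiffFixing r U, Commute g h₁ :=
      fun g hg => (hcen g (Subgroup.subset_closure (Or.inl hg))).1
    have hcommV : ∀ g ∈ icoDiffFixing r V, Commute g h₁ :=
      fun g hg => (hcen g (Subgroup.subset_closure (Or.inr hg))).1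
    have hUV : U ∩ V ∈ 𝓝 x := by
      filter_upwards [hh₁.eventually_apply_ne hx] with z hz
      exact ⟨hh₁.mem_of_apply_ne_of_commute hUcl hcommU hz,
        hh₁.mem_of_apply_ne_of_commute hVcl hcommV hz⟩
    obtain ⟨a, b, hxab, hab⟩ := mem_nhds_iff_exists_Ioo_subset.1 hUV
    exact ⟨a, b, hxab.1.trans hxab.2, hab⟩
  · rintro ⟨a, b, hab, hsub⟩
    obtain ⟨h₁, h₂, hh₁, hh₂, hfix₁, hfix₂, hnc⟩ := exists_not_commute_isIcoDiff r isOpen_Ioo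
      (fun z hz => hU (hsub hz).1) (nonempty_Ioo.2 hab)
    have hS : ∀ g ∈ icoDiffFixing r U ∪ icoDiffFixing r V, ∀ x ∈ Ioo a b, g x = x := by
      rintro g (⟨-, hg⟩ | ⟨-, hg⟩) x hx
      exacts [hg x (hsub hx).1, hg x (hsub hx).2]
    exact ⟨h₁, h₂, hh₁, hh₂, fun k hk => ⟨Equiv.Perm.commute_of_mem_closure hS hfix₁ hk,
      Equiv.Perm.commute_of_mem_closure hS hfix₂ hk⟩, hnc⟩

/-- Corollary 3.6: for closed proper subsets U, V of [0,1) whose fixing subgroups are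
nonabelian, the subgroup generated by G^U and G^V has nonabelian centralizer iff
U ∩ V contains a nonempty open set. -/
theorem generated_fixing_subgroups_centralizer (r : ℕ∞) (hr : 2 ≤ r) (U V : Set ℝ)
    (hU : U ⊆ Set.Ico 0 1) (hV : V ⊆ Set.Ico 0 1)
    (hUcl : ∀ x ∈ Set.Ico (0:ℝ) 1, x ∈ closure U → x ∈ U)
    (hVcl : ∀ x ∈ Set.Ico (0:ℝ) 1, x ∈ closure V → x ∈ V)
    (hUne : U ≠ Set.Ico 0 1) (hVne : V ≠ Set.Ico 0 1)
    (hGUna : ∃ g₁ g₂ : Equiv.Perm ℝ,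
      (IsIcoDiff r g₁ ∧ ∀ x ∈ U, g₁ x = x) ∧
      (IsIcoDiff r g₂ ∧ ∀ x ∈ U, g₂ x = x) ∧ ¬Commute g₁ g₂)
    (hGVna : ∃ g₁ g₂ : Equiv.Perm ℝ,
      (IsIcoDiff r g₁ ∧ ∀ x ∈ V, g₁ x = x) ∧
      (IsIcoDiff r g₂ ∧ ∀ x ∈ V, g₂ x = x) ∧ ¬Commute g₁ g₂) :
    (∃ h₁ h₂ : Equiv.Perm ℝ, IsIcoDiff r h₁ ∧ IsIcoDiff r h₂ ∧
      (∀ k ∈ Subgroup.closure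
          ({g : Equiv.Perm ℝ | IsIcoDiff r g ∧ ∀ x ∈ U, g x = x} ∪
           {g : Equiv.Perm ℝ | IsIcoDiff r g ∧ ∀ x ∈ V, g x = x}),
        Commute k h₁ ∧ Commute k h₂) ∧
      ¬Commute h₁ h₂) ↔
    ∃ a b : ℝ, a < b ∧ Set.Ioo a b ⊆ U ∩ V :=
  generated_fixing_subgroups_centralizer_general r U V hU hUcl hVcl
end

section
/- Let ψ^t be a flow (one-parameter group of homeomorphisms) on (0,1) such that ψ^t is fixed-point free for all t ≠ 0, let α : ℝ → ℝ be an additive group homomorphism, and let U ⊆ (0,1) be a nonempty open set whose closure is contained in (0,1). Then α is continuous if and only if there exists δ > 0 such that ψ^{α(t)}(U) ∩ U ≠ ∅ for all |t| < δ. -/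
/-!
The displacement `x ↦ ψ¹ x - x` of a fixed-point-free flow on `(0,1)` has constant sign and is
bounded away from `0` on a compact interval `[a, b] ⊂ (0,1)`, while orbits are strictly monotone in
time; hence `ψˢ` moves `[a, b]` off itself once `|s|` is large. So if `ψ^{α t}(U)` meets `U` for
`|t| < δ`, then `α` is bounded on `(-δ, δ)`, and an additive map `ℝ → ℝ` bounded near `0` is
continuous since `α t = α (n t) / n`. Conversely, if `α` is continuous then `ψ^{α t} x` stays in
`U` for small `t` whenever `x ∈ U`.
-/

open Set Filter Topology Function

local notation "I" => Set.Ioo (0:ℝ) 1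

theorem AddMonoidHom.continuous_of_abs_le (f : ℝ →+ ℝ) {δ C : ℝ} (hδ : 0 < δ)
    (hf : ∀ t, |t| < δ → |f t| ≤ C) : Continuous f := by
  refine continuous_of_tendsto_nhds_zero f (Metric.tendsto_nhds.2 fun ε hε => ?_)
  have hC : 0 ≤ C := (abs_nonneg _).trans (hf 0 (by simpa))
  obtain ⟨n, hn⟩ := exists_nat_gt (C / ε)
  have hn₀ : (0 : ℝ) < n := (div_nonneg hC hε.le).trans_lt hn
  rw [div_lt_iff₀ hε] at hn
  filter_upwards [Metric.ball_mem_nhds 0 (div_pos hδ hn₀)] with t ht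
  rw [Metric.mem_ball, Real.dist_0_eq_abs, lt_div_iff₀ hn₀] at ht
  rw [Real.dist_0_eq_abs]
  have hmul : f (n * t) = n * f t := by simpa only [nsmul_eq_mul] using map_nsmul f n t
  have hbound := hf (n * t) (by rwa [abs_mul, abs_of_pos hn₀, mul_comm])
  rw [hmul, abs_mul, abs_of_pos hn₀] at hbound
  nlinarith

theorem exists_lt_iterate_of_add_le {X : Type*} (f : X → X) (v : X → ℝ) {a b ε : ℝ}
    (hε : 0 < ε) (hle : ∀ x, v x ≤ v (f x)) (hstep : ∀ x, v x ∈ Icc a b → v x + ε ≤ v (f x)) :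
    ∃ n : ℕ, ∀ x, a ≤ v x → b < v (f^[n] x) := by
  have hprogress : ∀ n : ℕ, ∀ x, a ≤ v x → b < v (f^[n] x) ∨ a + n * ε ≤ v (f^[n] x) := by
    intro n x hx
    induction n with
    | zero => simpa using Or.inr hx
    | succ n ih =>
      rw [iterate_succ_apply']
      rcases ih with hb | ha
      · exact Or.inl (hb.trans_le (hle _))
      · by_cases hb : v (f^[n] x) ≤ b
        · have := hstep _ ⟨le_trans (by nlinarith [n.cast_nonneg (α := ℝ)]) ha, hb⟩
          push_cast
          exact Or.inr (by linarith)
        · exact Or.inl ((not_le.1 hb).trans_le (hle _))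
  obtain ⟨n, hn⟩ := exists_nat_gt ((b - a) / ε)
  rw [div_lt_iff₀ hε] at hn
  exact ⟨n, fun x hx => (hprogress n x hx).elim id fun h => by linarith⟩

theorem Continuous.forall_lt_or_forall_gt_of_forall_ne {X : Type*} [LinearOrder X]
    [TopologicalSpace X] [OrderClosedTopology X] [PreconnectedSpace X] {f : X → X}
    (hf : Continuous f) (hne : ∀ x, f x ≠ x) : (∀ x, x < f x) ∨ ∀ x, f x < x := by
  by_contra! h
  obtain ⟨⟨a, ha⟩, b, hb⟩ := h
  obtain ⟨x, hx⟩ := intermediate_value_univ₂ hf continuous_id ha hb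
  exact hne x hx

namespace Flow

variable {X : Type*} [TopologicalSpace X] (ϕ : Flow ℝ X)

theorem injective_orbit (hfree : ∀ t : ℝ, t ≠ 0 → ∀ x, ϕ t x ≠ x) (x : X) :
    Injective (ϕ · x) := by
  intro s t hst
  by_contra hne
  refine hfree (s - t) (sub_ne_zero.2 hne) (ϕ t x) ?_
  simp only [← map_add, sub_add_cancel, hst]

theorem apply_natCast_eq_iterate (n : ℕ) (x : X) : ϕ n x = (ϕ 1)^[n] x := by
  induction n with
  | zero => simp
  | succ n ih => rw [iterate_succ_apply', ← ih, Nat.cast_succ, add_comm, map_add]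

section Ordered

variable [LinearOrder X] [OrderClosedTopology X] (hfree : ∀ t : ℝ, t ≠ 0 → ∀ x, ϕ t x ≠ x)
include hfree

theorem strictMono_orbit {x : X} (hx : x < ϕ 1 x) : StrictMono (ϕ · x) :=
  ((ϕ.continuous continuous_id continuous_const).strictMono_of_inj
    (ϕ.injective_orbit hfree x)).resolve_right fun h =>
      (h zero_lt_one).not_gt (show ϕ 0 x < ϕ 1 x by rwa [map_zero_apply])

theorem self_le_apply {x : X} (hx : x < ϕ 1 x) {t : ℝ} (ht : 0 ≤ t) : x ≤ ϕ t x := by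
  simpa using (ϕ.strictMono_orbit hfree hx).monotone ht

end Ordered

section UnitInterval

variable (ϕ : Flow ℝ I) (hfree : ∀ t : ℝ, t ≠ 0 → ∀ x, ϕ t x ≠ x)
include hfree

theorem exists_lt_apply_of_forall_lt (hpos : ∀ x, x < ϕ 1 x) {a b : ℝ} (ha : 0 < a)
    (hb : b < 1) : ∃ N : ℝ, ∀ s ≥ N, ∀ x : I, a ≤ x → b < ϕ s x := by
  have hK : IsCompact (Subtype.val ⁻¹' Icc a b : Set I) := by
    rw [Subtype.isCompact_iff, Subtype.image_preimage_coe,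
      inter_eq_right.2 (Icc_subset_Ioo ha hb)]
    exact isCompact_Icc
  have hcont : Continuous fun x : I => (ϕ 1 x : ℝ) - x :=
    (continuous_subtype_val.comp (ϕ.continuous_toFun 1)).sub continuous_subtype_val
  obtain ⟨ε, hε, hdisp⟩ := hK.exists_forall_le' hcont.continuousOn fun x _ => sub_pos.2 (hpos x)
  obtain ⟨n, hn⟩ := exists_lt_iterate_of_add_le (ϕ 1) Subtype.val hε (fun x => (hpos x).le)
    fun x hx => by linarith [hdisp x hx]
  refine ⟨n, fun s hs x hx => ?_⟩
  rw [← sub_add_cancel s n, map_add, apply_natCast_eq_iterate]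
  exact (hn x hx).trans_le (ϕ.self_le_apply hfree (hpos _) (sub_nonneg.2 hs))

theorem exists_apply_notMem_Icc_of_forall_lt (hpos : ∀ x, x < ϕ 1 x) {a b : ℝ} (ha : 0 < a)
    (hb : b < 1) :
    ∃ N : ℝ, ∀ s, N ≤ |s| → ∀ x : I, (x : ℝ) ∈ Icc a b → (ϕ s x : ℝ) ∉ Icc a b := by
  obtain ⟨N, hN⟩ := ϕ.exists_lt_apply_of_forall_lt hfree hpos ha hb
  refine ⟨N, fun s hs x hx hsx => ?_⟩
  rcases le_total 0 s with h | h
  · exact (hN s (by rwa [abs_of_nonneg h] at hs) x hx.1).not_ge hsx.2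
  · have := hN (-s) (by rwa [abs_of_nonpos h] at hs) _ hsx.1
    rw [← map_add, neg_add_cancel, map_zero_apply] at this
    exact this.not_ge hx.2

theorem exists_apply_notMem_Icc {a b : ℝ} (ha : 0 < a) (hb : b < 1) :
    ∃ N : ℝ, ∀ s, N ≤ |s| → ∀ x : I, (x : ℝ) ∈ Icc a b → (ϕ s x : ℝ) ∉ Icc a b := by
  have : PreconnectedSpace I := Subtype.preconnectedSpace isPreconnected_Ioo
  rcases (ϕ.continuous_toFun 1).forall_lt_or_forall_gt_of_forall_ne (hfree 1 one_ne_zero) with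
    hpos | hneg
  · exact ϕ.exists_apply_notMem_Icc_of_forall_lt hfree hpos ha hb
  · obtain ⟨N, hN⟩ := ϕ.reverse.exists_apply_notMem_Icc_of_forall_lt
      (fun t ht => hfree (-t) (neg_ne_zero.2 ht))
      (fun x => by simpa [← map_add] using hneg (ϕ (-1) x)) ha hb
    exact ⟨N, fun s hs => by simpa using hN (-s) (by rwa [abs_neg])⟩

end UnitInterval

end Flow

/-- Continuity criterion (Lemma 3.4): for a fixed-point-free flow ψ on (0,1), an additive
homomorphism α : ℝ → ℝ, and a nonempty open set U bounded away from the endpoints,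
α is continuous iff ψ^{α(t)}(U) meets U for all sufficiently small |t|. -/
theorem continuity_criterion
    (φ : ℝ → ↥(Set.Ioo (0:ℝ) 1) → ↥(Set.Ioo (0:ℝ) 1))
    (hcont : Continuous (fun p : ℝ × ↥(Set.Ioo (0:ℝ) 1) => φ p.1 p.2))
    (hzero : ∀ x, φ 0 x = x)
    (hadd : ∀ s t x, φ (s + t) x = φ s (φ t x))
    (hfree : ∀ t : ℝ, t ≠ 0 → ∀ x, φ t x ≠ x)
    (α : ℝ → ℝ) (hα : ∀ s t, α (s + t) = α s + α t)
    (U : Set ↥(Set.Ioo (0:ℝ) 1)) (hUo : IsOpen U) (hUne : U.Nonempty)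
    (hUbd : ∃ a b : ℝ, 0 < a ∧ b < 1 ∧ ∀ x ∈ U, a ≤ (x:ℝ) ∧ (x:ℝ) ≤ b) :
    Continuous α ↔ ∃ δ > 0, ∀ t : ℝ, |t| < δ → (φ (α t) '' U ∩ U).Nonempty := by
  let f : ℝ →+ ℝ := .mk' α hα
  constructor
  · intro hf
    obtain ⟨x, hx⟩ := hUne
    have hα0 : α 0 = 0 := map_zero f
    have horbit : Continuous fun t => φ (α t) x := hcont.comp (hf.prodMk continuous_const)
    have hlim : Tendsto (fun t => φ (α t) x) (𝓝 0) (𝓝 x) := by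
      simpa [hα0, hzero] using horbit.tendsto 0
    obtain ⟨δ, hδ, hball⟩ := Metric.eventually_nhds_iff_ball.1 (hlim.eventually (hUo.mem_nhds hx))
    exact ⟨δ, hδ, fun t ht => ⟨_, mem_image_of_mem _ hx, hball t (by simpa using ht)⟩⟩
  · rintro ⟨δ, hδ, hmeets⟩
    obtain ⟨a, b, ha, hb, hU⟩ := hUbd
    let ϕ : Flow ℝ I := ⟨φ, hcont, hadd, hzero⟩
    obtain ⟨N, hN⟩ := ϕ.exists_apply_notMem_Icc hfree ha hb
    refine f.continuous_of_abs_le hδ (C := N) fun t ht => le_of_not_gt fun hlt => ?_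
    obtain ⟨_, ⟨y, hy, rfl⟩, hty⟩ := hmeets t ht
    exact hN (α t) hlt.le y (hU y hy) (hU _ hty)
end
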